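/- Let ℓ_1,…,ℓ_k be pairwise non-proportional nonzero linear forms in S = ℝ[x,y,z] with dual points X = (p_1,…,p_k), and let d > r ≥ 0 be integers. Then every homogeneous polynomial of degree d belongs to the ideal ⟨ℓ_1^{r+1},…,ℓ_k^{r+1}⟩ if and only if d < α_{d−r}(X). -/

import Mathlib

/-!
The apolarity pairing `⟨F, G⟩ = ∑_α α! F_α G_α` on `ℝ[x,y,z]` is positive definite, makes
multiplication by `X j` adjoint to `∂/∂X j`, and satisfies `⟨ℓ_q^e, H⟩ = e! H(q)` for `H` of
degree `e`. Hence a form `G` of degree `d` is orthogonal to `ℓ_q^{r+1} S_{d-r-1}` exactly when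
all its derivatives of order `d - r - 1` vanish at `q`, which by Euler's formula means that `G`
vanishes to order `d - r` at `q`. So the power ideal contains `S_d` iff no nonzero form of degree
`d` vanishes to order `d - r` at every `p_i`. The degrees of such forms are closed upwards
(multiply by a power of `x`) and occur at all (a power of a product of linear forms through the
points), so this happens iff `d < α_{d-r}(X)`.
-/

open MvPolynomial

noncomputable section

/-- The polynomial ring `S = ℝ[x,y,z]`. -/
abbrev S3 : Type := MvPolynomial (Fin 3) ℝ

/-- The linear form with coefficient vector `p`, i.e. `p 0 • x + p 1 • y + p 2 • z`;
`p` is the dual point of this linear form. -/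
def linForm (p : Fin 3 → ℝ) : S3 := ∑ i, MvPolynomial.C (p i) * MvPolynomial.X i

/-- Iterated partial derivative along a list of coordinate directions, as a linear map. -/
def diffOp (L : List (Fin 3)) : S3 →ₗ[ℝ] S3 :=
  L.foldr (fun i f => (MvPolynomial.pderiv (R := ℝ) i).toLinearMap ∘ₗ f) LinearMap.id

/-- `F` vanishes to order `≥ s` at the point `p`: every iterated partial derivative of
total order at most `s - 1` vanishes at `p`. -/
def VanishesToOrder (F : S3) (p : Fin 3 → ℝ) (s : ℕ) : Prop :=
  ∀ L : List (Fin 3), L.length < s → MvPolynomial.eval p (diffOp L F) = 0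

/-- The subspace of polynomials vanishing to order `≥ s` at `p`. -/
def vanishSubmodule (p : Fin 3 → ℝ) (s : ℕ) : Submodule ℝ S3 :=
  ⨅ L ∈ {L : List (Fin 3) | L.length < s},
    LinearMap.ker ((MvPolynomial.aeval p).toLinearMap ∘ₗ diffOp L)

/-- Dimension of the degree-`d` graded piece of an ideal of `S`. -/
def idealDim (I : Ideal S3) (d : ℕ) : ℕ :=
  Module.finrank ℝ
    ↥(I.restrictScalars ℝ ⊓ MvPolynomial.homogeneousSubmodule (Fin 3) ℝ d)

/-- Dimension of the space of degree-`d` homogeneous polynomials vanishing to order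
`≥ m i` at each point `p i`. -/
def fatDim {k : ℕ} (p : Fin k → (Fin 3 → ℝ)) (m : Fin k → ℕ) (d : ℕ) : ℕ :=
  Module.finrank ℝ
    ↥(MvPolynomial.homogeneousSubmodule (Fin 3) ℝ d ⊓ ⨅ i, vanishSubmodule (p i) (m i))

/-- A list of vectors of `ℝ³` is pairwise non-proportional and nonzero. -/
def PairwiseNonProp {k : ℕ} (p : Fin k → (Fin 3 → ℝ)) : Prop :=
  (∀ i, p i ≠ 0) ∧ ∀ i j, i ≠ j → ∀ c : ℝ, p j ≠ c • p i

/-- `α_s(X)`: least degree of a nonzero homogeneous polynomial vanishing to order `≥ s`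
at every point of the list `X`. -/
def alphaDeg {k : ℕ} (p : Fin k → (Fin 3 → ℝ)) (s : ℕ) : ℕ :=
  sInf {d : ℕ | ∃ F : S3, F ≠ 0 ∧ F.IsHomogeneous d ∧ ∀ i, VanishesToOrder F (p i) s}

/-- The Waldschmidt constant `α̂(X) = inf { α_s(X)/s : s ≥ 1 }`. -/
def waldschmidt {k : ℕ} (p : Fin k → (Fin 3 → ℝ)) : ℝ :=
  sInf {x : ℝ | ∃ s : ℕ, 1 ≤ s ∧ x = (alphaDeg p s : ℝ) / (s : ℝ)}

/-- Integer binomial coefficient `C(m, 2)`, zero for `m < 2`. -/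
def choose2 (m : ℤ) : ℤ := if m < 2 then 0 else m * (m - 1) / 2

namespace MvPolynomial

section Apolar

variable {σ : Type*} [Fintype σ]

def factorialWeight (α : σ →₀ ℕ) : ℝ := ∏ i, ((α i).factorial : ℝ)

lemma factorialWeight_pos (α : σ →₀ ℕ) : 0 < factorialWeight α :=
  Finset.prod_pos fun i _ => by positivity

lemma factorialWeight_add_single [DecidableEq σ] (α : σ →₀ ℕ) (j : σ) :
    factorialWeight (α + Finsupp.single j 1) = factorialWeight α * (α j + 1) := by
  unfold factorialWeight
  rw [← Finset.mul_prod_erase _ _ (Finset.mem_univ j),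
    ← Finset.mul_prod_erase _ (fun i => ((α i).factorial : ℝ)) (Finset.mem_univ j),
    Finset.prod_congr rfl fun i hi => by
      rw [Finsupp.add_apply, Finsupp.single_eq_of_ne (Finset.ne_of_mem_erase hi), add_zero]]
  simp only [Finsupp.add_apply, Finsupp.single_eq_same, Nat.factorial_succ]
  push_cast
  ring

omit [Fintype σ] in
lemma sum_support_coeff_mul_eq {F : MvPolynomial σ ℝ} {s : Finset (σ →₀ ℕ)}
    (h : F.support ⊆ s) (c : (σ →₀ ℕ) → ℝ) :
    ∑ α ∈ F.support, F.coeff α * c α = ∑ α ∈ s, F.coeff α * c α :=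
  Finset.sum_subset h fun α _ hα => by rw [notMem_support_iff.mp hα, zero_mul]

def apolar : MvPolynomial σ ℝ →ₗ[ℝ] MvPolynomial σ ℝ →ₗ[ℝ] ℝ := by
  classical
  exact LinearMap.mk₂ ℝ
    (fun F G => ∑ α ∈ F.support, F.coeff α * (factorialWeight α * G.coeff α))
    (fun F F' G => by
      rw [sum_support_coeff_mul_eq (support_add (p := F) (q := F')),
        sum_support_coeff_mul_eq (Finset.subset_union_left (s₂ := F'.support)),
        sum_support_coeff_mul_eq (Finset.subset_union_right (s₁ := F.support)),
        ← Finset.sum_add_distrib]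
      simp only [coeff_add, add_mul])
    (fun c F G => by
      rw [sum_support_coeff_mul_eq (support_smul (a := c) (f := F)), smul_eq_mul, Finset.mul_sum]
      simp only [coeff_smul, smul_eq_mul, mul_assoc])
    (fun F G G' => by
      rw [← Finset.sum_add_distrib]
      simp only [coeff_add, mul_add])
    (fun c F G => by
      rw [smul_eq_mul, Finset.mul_sum]
      exact Finset.sum_congr rfl fun _ _ => by simp only [coeff_smul, smul_eq_mul]; ring)

lemma apolar_apply (F G : MvPolynomial σ ℝ) :
    apolar F G = ∑ α ∈ F.support, F.coeff α * (factorialWeight α * G.coeff α) :=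
  rfl

lemma apolar_mul_X (F G : MvPolynomial σ ℝ) (j : σ) :
    apolar (F * X j) G = apolar F (pderiv j G) := by
  classical
  rw [apolar_apply, apolar_apply, support_mul_X, Finset.sum_map]
  refine Finset.sum_congr rfl fun α _ => ?_
  simp only [addRightEmbedding_apply, coeff_mul_X, coeff_pderiv, factorialWeight_add_single]
  ring

lemma apolar_X_mul (F G : MvPolynomial σ ℝ) (j : σ) :
    apolar (X j * F) G = apolar F (pderiv j G) := by
  rw [mul_comm, apolar_mul_X]

lemma eq_zero_of_apolar_self_eq_zero {F : MvPolynomial σ ℝ} (h : apolar F F = 0) : F = 0 := by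
  have hterm := (Finset.sum_eq_zero_iff_of_nonneg fun α _ => by
    rw [mul_left_comm]; exact mul_nonneg (factorialWeight_pos α).le (mul_self_nonneg _)).mp h
  ext α
  rw [coeff_zero]
  by_contra hα
  simpa [hα, (factorialWeight_pos α).ne'] using hterm α (mem_support_iff.mpr hα)

lemma apolar_eq_zero_of_isHomogeneous {F G : MvPolynomial σ ℝ} {m n : ℕ}
    (hF : F.IsHomogeneous m) (hG : G.IsHomogeneous n) (hmn : m ≠ n) : apolar F G = 0 :=
  (apolar_apply F G).trans <| Finset.sum_eq_zero fun α hα => by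
    rw [hG.coeff_eq_zero (by
      rw [Finsupp.degree_eq_weight_one]; exact (hF (mem_support_iff.mp hα)).trans_ne hmn),
      mul_zero, mul_zero]

end Apolar

lemma pderiv_comm {σ R : Type*} [CommSemiring R] (i j : σ) (F : MvPolynomial σ R) :
    pderiv i (pderiv j F) = pderiv j (pderiv i F) := by
  classical
  ext α
  simp only [coeff_pderiv, Finsupp.add_apply, add_right_comm α (Finsupp.single i 1)]
  rcases eq_or_ne i j with rfl | hij
  · rfl
  · simp [Finsupp.single_eq_of_ne hij, Finsupp.single_eq_of_ne hij.symm]; ring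

lemma sum_mul_eval_pderiv {σ R : Type*} [Fintype σ] [CommSemiring R] {F : MvPolynomial σ R}
    {n : ℕ} (hF : F.IsHomogeneous n) (q : σ → R) :
    ∑ j, q j * eval q (pderiv j F) = n * eval q F := by
  simpa [map_sum, nsmul_eq_mul] using congrArg (eval q) hF.sum_X_mul_pderiv

lemma isHomogeneous_prod_map_X {σ R : Type*} [CommSemiring R] (L : List σ) :
    ((L.map X).prod : MvPolynomial σ R).IsHomogeneous L.length := by
  induction L with
  | nil => exact isHomogeneous_one σ R
  | cons i L ih => simpa [add_comm] using (isHomogeneous_X R i).mul ih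

lemma eval_eq_zero_of_forall_eval_pderiv_eq_zero {σ R : Type*} [Fintype σ] [CommRing R]
    [IsDomain R] [CharZero R] {H : MvPolynomial σ R} {n : ℕ} (hH : H.IsHomogeneous n)
    (hn : n ≠ 0) (q : σ → R) (h : ∀ j, eval q (pderiv j H) = 0) : eval q H = 0 := by
  have := sum_mul_eval_pderiv hH q
  simp only [h, mul_zero, Finset.sum_const_zero] at this
  exact (mul_eq_zero.mp this.symm).resolve_left (Nat.cast_ne_zero.mpr hn)

end MvPolynomial

lemma LinearMap.BilinForm.exists_ne_zero_apply_eq_zero_of_not_le {K M : Type*} [Field K]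
    [AddCommGroup M] [Module K M] (B : LinearMap.BilinForm K M) {V W : Submodule K M}
    [FiniteDimensional K V] (h : ¬ V ≤ W) :
    ∃ g ∈ V, g ≠ 0 ∧ ∀ w ∈ V, w ∈ W → B w g = 0 := by
  set W' := W.comap V.subtype
  have hW' : W' ≠ ⊤ := fun htop => h fun w hw =>
    (htop ▸ Submodule.mem_top : (⟨w, hw⟩ : V) ∈ W')
  have hdim := (B.restrict V).finrank_add_finrank_orthogonal' W'
  have hlt := Submodule.finrank_lt hW'
  obtain ⟨g, hg, hg0⟩ := Submodule.exists_mem_ne_zero_of_ne_bot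
    (Submodule.one_le_finrank_iff.mp (by omega) : (B.restrict V).orthogonal W' ≠ ⊥)
  exact ⟨g, g.2, by simpa using hg0, fun w hwV hwW => hg ⟨w, hwV⟩ hwW⟩

lemma diffOp_nil (F : S3) : diffOp [] F = F := rfl

lemma diffOp_cons (i : Fin 3) (L : List (Fin 3)) (F : S3) :
    diffOp (i :: L) F = pderiv i (diffOp L F) := rfl

lemma pderiv_diffOp (i : Fin 3) (L : List (Fin 3)) (F : S3) :
    pderiv i (diffOp L F) = diffOp L (pderiv i F) := by
  induction L with
  | nil => rfl
  | cons j L ih => rw [diffOp_cons, diffOp_cons, ← ih, pderiv_comm]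

lemma isHomogeneous_diffOp {F : S3} {n : ℕ} (hF : F.IsHomogeneous n) (L : List (Fin 3)) :
    (diffOp L F).IsHomogeneous (n - L.length) := by
  induction L with
  | nil => exact hF
  | cons i L ih => simpa [diffOp_cons, Nat.sub_sub] using ih.pderiv (i := i)

lemma apolar_prod_map_X_mul (L : List (Fin 3)) (F G : S3) :
    apolar ((L.map X).prod * F) G = apolar F (diffOp L G) := by
  induction L generalizing G with
  | nil => rw [List.map_nil, List.prod_nil, one_mul, diffOp_nil]
  | cons i L ih =>
    rw [List.map_cons, List.prod_cons, mul_assoc, apolar_X_mul, ih, diffOp_cons, pderiv_diffOp]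

lemma isHomogeneous_linForm (q : Fin 3 → ℝ) : (linForm q).IsHomogeneous 1 :=
  IsHomogeneous.sum _ _ _ fun _ _ => isHomogeneous_C_mul_X _ _

lemma isHomogeneous_linForm_pow (q : Fin 3 → ℝ) (e : ℕ) : (linForm q ^ e).IsHomogeneous e := by
  simpa using (isHomogeneous_linForm q).pow e

lemma eval_linForm (q x : Fin 3 → ℝ) : eval x (linForm q) = ∑ j, q j * x j := by
  simp [linForm]

lemma apolar_linForm_pow (q : Fin 3 → ℝ) {H : S3} {e : ℕ} (hH : H.IsHomogeneous e) :
    apolar (linForm q ^ e) H = e.factorial * eval q H := by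
  induction e generalizing H with
  | zero =>
    obtain ⟨c, rfl⟩ : ∃ c, H = C c :=
      ⟨_, totalDegree_eq_zero_iff_eq_C.mp ((totalDegree_zero_iff_isHomogeneous _).mpr hH)⟩
    simp [apolar_apply, factorialWeight]
  | succ e ih =>
    have hexpand : linForm q ^ (e + 1) = ∑ j, C (q j) * (X j * linForm q ^ e) := by
      rw [pow_succ', linForm, Finset.sum_mul]
      exact Finset.sum_congr rfl fun j _ => by ring
    have hterm (j : Fin 3) : apolar (C (q j) * (X j * linForm q ^ e)) H
        = q j * (e.factorial * eval q (pderiv j H)) := by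
      rw [C_mul', map_smul, LinearMap.smul_apply, apolar_X_mul, ih (by simpa using hH.pderiv)]
      rfl
    rw [hexpand, map_sum, LinearMap.sum_apply, Finset.sum_congr rfl fun j _ => hterm j]
    simp only [mul_left_comm _ (e.factorial : ℝ), ← Finset.mul_sum, sum_mul_eval_pderiv hH,
      Nat.factorial_succ]
    push_cast
    ring

lemma apolar_mul_eq_zero_of_forall_apolar_diffOp_eq_zero {F G : S3}
    (h : ∀ L, apolar F (diffOp L G) = 0) (H : S3) : apolar (H * F) G = 0 := by
  induction H using MvPolynomial.induction_on generalizing G with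
  | C a => rw [C_mul', map_smul, LinearMap.smul_apply, ← diffOp_nil G, h, smul_zero]
  | add H H' hH hH' => rw [add_mul, map_add, LinearMap.add_apply, hH h, hH' h, add_zero]
  | mul_X H j hH =>
    rw [mul_right_comm, mul_comm, apolar_X_mul]
    exact hH fun L => by rw [← pderiv_diffOp, ← diffOp_cons]; exact h _

lemma vanishesToOrder_zero (F : S3) (q : Fin 3 → ℝ) : VanishesToOrder F q 0 :=
  fun _ hL => absurd hL (Nat.not_lt_zero _)

lemma VanishesToOrder.pderiv {F : S3} {q : Fin 3 → ℝ} {s : ℕ} (h : VanishesToOrder F q s)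
    (j : Fin 3) : VanishesToOrder (pderiv j F) q (s - 1) := fun L hL => by
  rw [← pderiv_diffOp, ← diffOp_cons]
  exact h _ (by simp only [List.length_cons]; omega)

lemma VanishesToOrder.mul {F G : S3} {q : Fin 3 → ℝ} {a b : ℕ}
    (hF : VanishesToOrder F q a) (hG : VanishesToOrder G q b) :
    VanishesToOrder (F * G) q (a + b) := by
  intro L
  induction L generalizing F G a b with
  | nil =>
    intro hab
    rw [diffOp_nil, eval_mul]
    rcases Nat.eq_zero_or_pos a with rfl | ha
    · rw [show eval q G = 0 from hG [] (by simpa using hab), mul_zero]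
    · rw [show eval q F = 0 from hF [] ha, zero_mul]
  | cons i L ih =>
    intro hL
    simp only [List.length_cons] at hL
    rw [diffOp_cons, pderiv_diffOp, Derivation.leibniz, map_add, eval_add, smul_eq_mul,
      smul_eq_mul, ih hF (hG.pderiv i) (by omega), ih hG (hF.pderiv i) (by omega), add_zero]

lemma VanishesToOrder.pow {F : S3} {q : Fin 3 → ℝ} (h : VanishesToOrder F q 1) (s : ℕ) :
    VanishesToOrder (F ^ s) q s := by
  induction s with
  | zero => exact vanishesToOrder_zero _ q
  | succ s ih => rw [pow_succ]; exact ih.mul h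

lemma vanishesToOrder_of_forall_eval_diffOp_eq_zero {G : S3} {d s : ℕ} (hG : G.IsHomogeneous d)
    (hs : s ≤ d) (q : Fin 3 → ℝ)
    (h : ∀ L : List (Fin 3), L.length + 1 = s → eval q (diffOp L G) = 0) :
    VanishesToOrder G q s := by
  suffices ∀ m (L : List (Fin 3)), L.length + 1 + m = s → eval q (diffOp L G) = 0 from
    fun L hL => this (s - (L.length + 1)) L (by omega)
  intro m
  induction m with
  | zero => exact h
  | succ m ih =>
    intro L hL
    refine eval_eq_zero_of_forall_eval_pderiv_eq_zero (isHomogeneous_diffOp hG L) (by omega) q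
      fun j => ?_
    rw [← diffOp_cons]
    exact ih _ (by simp only [List.length_cons]; omega)

lemma VanishesToOrder.apolar_mul_linForm_pow_eq_zero {G : S3} {q : Fin 3 → ℝ} {d r : ℕ}
    (hv : VanishesToOrder G q (d - r)) (hG : G.IsHomogeneous d) (H : S3) :
    apolar (H * linForm q ^ (r + 1)) G = 0 := by
  refine apolar_mul_eq_zero_of_forall_apolar_diffOp_eq_zero (fun L => ?_) H
  by_cases hL : d - L.length = r + 1
  · rw [apolar_linForm_pow q (hL ▸ isHomogeneous_diffOp hG L), hv L (by omega), mul_zero]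
  · exact apolar_eq_zero_of_isHomogeneous (isHomogeneous_linForm_pow q (r + 1))
      (isHomogeneous_diffOp hG L) (by omega)

lemma vanishesToOrder_of_forall_apolar_eq_zero {G : S3} {q : Fin 3 → ℝ} {d r : ℕ}
    (hG : G.IsHomogeneous d)
    (h : ∀ L : List (Fin 3), L.length + (r + 1) = d →
      apolar ((L.map X).prod * linForm q ^ (r + 1)) G = 0) :
    VanishesToOrder G q (d - r) := by
  refine vanishesToOrder_of_forall_eval_diffOp_eq_zero hG (Nat.sub_le d r) q fun L hL => ?_
  have hdeg : (diffOp L G).IsHomogeneous (r + 1) := by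
    simpa [show d - L.length = r + 1 by omega] using isHomogeneous_diffOp hG L
  have := h L (by omega)
  rw [apolar_prod_map_X_mul, apolar_linForm_pow q hdeg] at this
  exact (mul_eq_zero.mp this).resolve_left (Nat.cast_ne_zero.mpr (Nat.factorial_ne_zero _))

lemma exists_linForm_ne_zero_eval_eq_zero (v : Fin 3 → ℝ) :
    ∃ w, linForm w ≠ 0 ∧ eval v (linForm w) = 0 := by
  obtain ⟨w, hw, hw0⟩ := Submodule.exists_mem_ne_zero_of_ne_bot
    (LinearMap.ker_ne_bot_of_finrank_lt (f := Fintype.linearCombination ℝ v) (by simp))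
  refine ⟨w, fun h => hw0 ?_, ?_⟩
  · have := congrArg (eval w) h
    rw [eval_linForm, map_zero, Finset.sum_mul_self_eq_zero_iff] at this
    exact funext fun j => this j (Finset.mem_univ j)
  · simpa [eval_linForm, Fintype.linearCombination_apply] using hw

lemma exists_ne_zero_isHomogeneous_vanishesToOrder {k : ℕ} (p : Fin k → (Fin 3 → ℝ)) (s : ℕ) :
    ∃ e, ∃ F : S3, F ≠ 0 ∧ F.IsHomogeneous e ∧ ∀ i, VanishesToOrder F (p i) s := by
  choose w hw0 hw using fun i => exists_linForm_ne_zero_eval_eq_zero (p i)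
  refine ⟨k * s, (∏ i, linForm (w i)) ^ s, pow_ne_zero s (Finset.prod_ne_zero_iff.mpr
    fun i _ => hw0 i), ?_, fun i => VanishesToOrder.pow (fun L hL => ?_) s⟩
  · simpa using (IsHomogeneous.prod Finset.univ _ (fun _ => 1) fun i _ =>
      isHomogeneous_linForm (w i)).pow s
  · rw [List.length_eq_zero_iff.mp (Nat.lt_one_iff.mp hL), diffOp_nil, map_prod]
    exact Finset.prod_eq_zero (Finset.mem_univ i) (hw i)

-- `alphaDeg` is an `sInf`, which is `0` on the empty set: attaining it needs the witness above.
lemma exists_isHomogeneous_alphaDeg {k : ℕ} (p : Fin k → (Fin 3 → ℝ)) (s : ℕ) :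
    ∃ F : S3, F ≠ 0 ∧ F.IsHomogeneous (alphaDeg p s) ∧ ∀ i, VanishesToOrder F (p i) s :=
  Nat.sInf_mem (exists_ne_zero_isHomogeneous_vanishesToOrder p s)

lemma alphaDeg_le {k : ℕ} {p : Fin k → (Fin 3 → ℝ)} {s d : ℕ} {F : S3} (hF0 : F ≠ 0)
    (hF : F.IsHomogeneous d) (hv : ∀ i, VanishesToOrder F (p i) s) : alphaDeg p s ≤ d :=
  Nat.sInf_le ⟨F, hF0, hF, hv⟩

theorem lt_alphaDeg_iff {k : ℕ} (p : Fin k → (Fin 3 → ℝ)) (s d : ℕ) :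
    d < alphaDeg p s ↔
      ∀ G : S3, G.IsHomogeneous d → (∀ i, VanishesToOrder G (p i) s) → G = 0 := by
  refine ⟨fun h G hG hv => by_contra fun hG0 => (alphaDeg_le hG0 hG hv).not_gt h,
    fun h => not_le.mp fun hle => ?_⟩
  obtain ⟨F, hF0, hF, hv⟩ := exists_isHomogeneous_alphaDeg p s
  refine mul_ne_zero hF0 (pow_ne_zero (d - alphaDeg p s) (X_ne_zero 0)) (h _ ?_ fun i => ?_)
  · simpa [Nat.add_sub_cancel' hle] using hF.mul (isHomogeneous_X_pow 0 (d - alphaDeg p s))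
  · simpa using (hv i).mul (vanishesToOrder_zero (X 0 ^ (d - alphaDeg p s)) (p i))

theorem forall_mem_span_linForm_pow_iff {k : ℕ} (p : Fin k → (Fin 3 → ℝ)) (r d : ℕ) :
    (∀ F : S3, F.IsHomogeneous d →
        F ∈ Ideal.span (Set.range fun i => linForm (p i) ^ (r + 1))) ↔
      ∀ G : S3, G.IsHomogeneous d → (∀ i, VanishesToOrder G (p i) (d - r)) → G = 0 := by
  set I := Ideal.span (Set.range fun i => linForm (p i) ^ (r + 1))
  refine ⟨fun h G hG hv => eq_zero_of_apolar_self_eq_zero ?_,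
    fun h F hF => by_contra fun hFI => ?_⟩
  · obtain ⟨c, hc⟩ := Ideal.mem_span_range_iff_exists_fun.mp (h G hG)
    calc apolar G G = apolar (∑ i, c i * linForm (p i) ^ (r + 1)) G := by rw [hc]
      _ = ∑ i, apolar (c i * linForm (p i) ^ (r + 1)) G := by rw [map_sum, LinearMap.sum_apply]
      _ = 0 := Finset.sum_eq_zero fun i _ => (hv i).apolar_mul_linForm_pow_eq_zero hG (c i)
  · have : FiniteDimensional ℝ (homogeneousSubmodule (Fin 3) ℝ d) :=
      Module.Finite.iff_fg.mpr (homogeneousSubmodule_fg (Fin 3) ℝ d)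
    obtain ⟨g, hgV, hg0, hg⟩ := LinearMap.BilinForm.exists_ne_zero_apply_eq_zero_of_not_le apolar
      (V := homogeneousSubmodule (Fin 3) ℝ d) (W := I.restrictScalars ℝ) fun hle => hFI (hle hF)
    refine hg0 (h g hgV fun i =>
      vanishesToOrder_of_forall_apolar_eq_zero hgV fun L hL => hg _ ?_ ?_)
    · exact hL ▸ (isHomogeneous_prod_map_X L).mul (isHomogeneous_linForm_pow (p i) (r + 1))
    · exact I.mul_mem_left _ (Ideal.subset_span ⟨i, rfl⟩)

theorem statement13_general {k : ℕ} (p : Fin k → (Fin 3 → ℝ))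
    (r d : ℕ) :
    (∀ F : S3, F.IsHomogeneous d →
        F ∈ Ideal.span (Set.range fun i => linForm (p i) ^ (r + 1)))
      ↔ d < alphaDeg p (d - r) :=
  (forall_mem_span_linForm_pow_iff p r d).trans (lt_alphaDeg_iff p (d - r) d).symm

/-- for pairwise non-proportional nonzero linear forms with dual points
`X = (p 1, …, p k)` and `d > r ≥ 0`, every homogeneous polynomial of degree `d` belongs
to `⟨ℓ₁^{r+1}, …, ℓ_k^{r+1}⟩` if and only if `d < α_{d−r}(X)`. -/
theorem statement13 {k : ℕ} (p : Fin k → (Fin 3 → ℝ)) (hp : PairwiseNonProp p)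
    (r d : ℕ) (hrd : r < d) :
    (∀ F : S3, F.IsHomogeneous d →
        F ∈ Ideal.span (Set.range fun i => linForm (p i) ^ (r + 1)))
      ↔ d < alphaDeg p (d - r) :=
  statement13_general p r d

end
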